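/- The intersection graph of any n c-fat objects in R^d admits a 3-hop spanner with O_{d,c}(n log n) edges. -/

import Mathlib

/-- An axis-aligned hypercube in `ℝ^d` with lower corner `a` and side length `ℓ`. -/
def hcube (d : ℕ) (a : Fin d → ℝ) (ℓ : ℝ) : Set (Fin d → ℝ) :=
  {x | ∀ i, a i ≤ x i ∧ x i ≤ a i + ℓ}

/-- The side length of an object: the side length of its smallest enclosing
axis-aligned hypercube. -/
noncomputable def sideLength (d : ℕ) (u : Set (Fin d → ℝ)) : ℝ :=
  sInf {ℓ : ℝ | 0 ≤ ℓ ∧ ∃ a : Fin d → ℝ, u ⊆ hcube d a ℓ}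

/-- The quadtree cell `[c₁·2^{-k}, (c₁+1)·2^{-k}) × ⋯ × [c_d·2^{-k}, (c_d+1)·2^{-k})`. -/
def qtCell (d : ℕ) (k : ℤ) (c : Fin d → ℤ) : Set (Fin d → ℝ) :=
  {x | ∀ i, (c i : ℝ) * (2 : ℝ) ^ (-k) ≤ x i ∧ x i < ((c i : ℝ) + 1) * (2 : ℝ) ^ (-k)}

/-- `γ` is a quadtree cell. -/
def IsQuadtreeCell (d : ℕ) (γ : Set (Fin d → ℝ)) : Prop :=
  ∃ (k : ℤ) (c : Fin d → ℤ), γ = qtCell d k c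

/-- An object `u` is `C`-aligned if it is contained in a quadtree cell of side length
at most `C` times the side length of `u`. -/
def IsAligned (d : ℕ) (C : ℝ) (u : Set (Fin d → ℝ)) : Prop :=
  ∃ (k : ℤ) (c : Fin d → ℤ),
    (2 : ℝ) ^ (-k) ≤ C * sideLength d u ∧ u ⊆ qtCell d k c

/-- A collection `F` of objects in `ℝ^d` is `c`-fat if for every hypercube `γ` of side
length `ℓ` there exist at most `c` points hitting all members of `F` that intersect `γ`
and have side length at least `ℓ`. -/
def CFat (d c : ℕ) (F : Set (Set (Fin d → ℝ))) : Prop :=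
  ∀ (a : Fin d → ℝ) (ℓ : ℝ), 0 < ℓ →
    ∃ P : Finset (Fin d → ℝ), P.card ≤ c ∧
      ∀ u ∈ F, (u ∩ hcube d a ℓ).Nonempty → ℓ ≤ sideLength d u → ∃ p ∈ P, p ∈ u

/-- `H` is a `t`-hop spanner of `G`. -/
def IsHopSpanner {V : Type*} (G H : SimpleGraph V) (t : ℕ) : Prop :=
  H ≤ G ∧ ∀ u v : V, G.Adj u v → ∃ p : H.Walk u v, p.length ≤ t

/-!
Each object gets the quadtree level matching its size and marks the at most `3^d` cells of that
level that it meets; under inclusion these cells form a forest. If two objects meet at `x`, the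
cells of `x` at their two levels are nested, so the centroid decomposition of the marked cells has
a piece whose centroid cell `g` lies between them. By fatness, the objects at least as large as `g`
that meet `g` are pierced by `c` points. A star on the objects through each piercing point, plus
one edge from every smaller object to a neighbour through each piercing point, joins the two
objects within three hops. A marked cell lies in `O(log n)` pieces with a comparable centroid,
which gives `O(n log n)` edges. Objects of side `0` are points, joined by stars on equal points.
-/

noncomputable section

open Finset

open scoped Classical

theorem mem_qtCell_iff {d : ℕ} {k : ℤ} {c : Fin d → ℤ} {x : Fin d → ℝ} :
    x ∈ qtCell d k c ↔ ∀ i, ⌊x i * 2 ^ k⌋ = c i := by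
  have h2k : (0 : ℝ) < 2 ^ k := zpow_pos two_pos k
  simp only [qtCell, Set.mem_ofPred_eq, Int.floor_eq_iff, zpow_neg, ← div_eq_mul_inv,
    div_le_iff₀ h2k, lt_div_iff₀ h2k]

theorem floor_mul_two_zpow_of_le {k' k : ℤ} (h : k' ≤ k) (t : ℝ) :
    ⌊t * 2 ^ k'⌋ = ⌊t * 2 ^ k⌋ / 2 ^ (k - k').toNat := by
  obtain ⟨m, rfl⟩ : ∃ m : ℕ, k = k' + m := ⟨(k - k').toNat, by omega⟩
  have hrescale : t * 2 ^ k' = t * 2 ^ (k' + m) / ((2 ^ m : ℕ) : ℝ) := by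
    rw [zpow_add₀ two_ne_zero, zpow_natCast]
    push_cast
    field_simp
  rw [hrescale, Int.floor_div_natCast]
  simp

theorem exists_hcube_of_sideLength_lt {d : ℕ} {u : Set (Fin d → ℝ)}
    (hu : Bornology.IsBounded u) {r : ℝ} (h : sideLength d u < r) :
    ∃ a ℓ, ℓ < r ∧ u ⊆ hcube d a ℓ := by
  obtain ⟨R, hR⟩ := hu.subset_closedBall 0
  have hne : {ℓ : ℝ | 0 ≤ ℓ ∧ ∃ a, u ⊆ hcube d a ℓ}.Nonempty := by
    refine ⟨2 * max R 0, by positivity, fun _ => -max R 0, fun x hx i => ?_⟩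
    have hxi : |x i| ≤ R := (norm_le_pi_norm x i).trans (mem_closedBall_zero_iff.1 (hR hx))
    have := le_max_left R 0
    constructor <;> linarith [abs_le.1 hxi]
  obtain ⟨ℓ, ⟨-, a, ha⟩, hℓ⟩ := (csInf_lt_iff ⟨0, fun _ h => h.1⟩ hne).1 h
  exact ⟨a, ℓ, hℓ, ha⟩

theorem eq_of_mem_of_sideLength_nonpos {d : ℕ} {u : Set (Fin d → ℝ)}
    (hu : Bornology.IsBounded u) (h : sideLength d u ≤ 0) {x y : Fin d → ℝ} (hx : x ∈ u)
    (hy : y ∈ u) : x = y := by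
  funext i
  by_contra hne
  obtain ⟨a, ℓ, hℓ, hua⟩ :=
    exists_hcube_of_sideLength_lt hu (h.trans_lt (abs_pos.2 (sub_ne_zero.2 hne)))
  have hxi := hua hx i
  have hyi := hua hy i
  have : |x i - y i| ≤ ℓ := abs_sub_le_iff.2 ⟨by linarith, by linarith⟩
  linarith

@[ext]
structure QCell (d : ℕ) where
  level : ℤ
  index : Fin d → ℤ

namespace QCell

variable {d : ℕ} {γ δ : QCell d} {k k' : ℤ} {x y : Fin d → ℝ}

def carrier (γ : QCell d) : Set (Fin d → ℝ) := qtCell d γ.level γ.index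

def side (γ : QCell d) : ℝ := 2 ^ (-γ.level)

def corner (γ : QCell d) : Fin d → ℝ := fun i => γ.index i * γ.side

def cellAt (k : ℤ) (x : Fin d → ℝ) : QCell d := ⟨k, fun i => ⌊x i * 2 ^ k⌋⟩

theorem side_pos (γ : QCell d) : 0 < γ.side := zpow_pos two_pos _

theorem mem_carrier_iff : x ∈ γ.carrier ↔ cellAt γ.level x = γ := by
  simp only [carrier, mem_qtCell_iff, QCell.ext_iff, cellAt, funext_iff, true_and]

theorem mem_carrier_cellAt (k : ℤ) (x : Fin d → ℝ) : x ∈ (cellAt k x).carrier :=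
  mem_carrier_iff.2 rfl

theorem carrier_subset_hcube (γ : QCell d) : γ.carrier ⊆ hcube d γ.corner γ.side := by
  intro x hx i
  have := hx i
  simp only [corner, side] at this ⊢
  constructor <;> linarith

theorem corner_mem_carrier (γ : QCell d) : γ.corner ∈ γ.carrier := by
  intro i
  have := γ.side_pos
  simp only [corner, side] at this ⊢
  constructor <;> nlinarith

theorem cellAt_eq_cellAt_of_le (hk : k' ≤ k) (h : cellAt k x = cellAt k y) :
    cellAt k' x = cellAt k' y := by
  have hidx := congrArg QCell.index h
  simp only [cellAt, funext_iff] at hidx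
  simp only [cellAt, QCell.mk.injEq, true_and, funext_iff]
  intro i
  rw [floor_mul_two_zpow_of_le hk, floor_mul_two_zpow_of_le hk, hidx i]

theorem carrier_subset_of_mem (hγ : x ∈ γ.carrier) (hδ : x ∈ δ.carrier)
    (hk : δ.level ≤ γ.level) : γ.carrier ⊆ δ.carrier := by
  intro y hy
  rw [mem_carrier_iff] at hγ hδ hy ⊢
  rw [cellAt_eq_cellAt_of_le hk (hy.trans hγ.symm), hδ]

instance : PartialOrder (QCell d) where
  le γ δ := δ.level ≤ γ.level ∧ γ.carrier ⊆ δ.carrier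
  le_refl γ := ⟨le_rfl, subset_rfl⟩
  le_trans _ _ _ h₁ h₂ := ⟨h₂.1.trans h₁.1, h₁.2.trans h₂.2⟩
  le_antisymm γ δ h₁ h₂ := by
    have hγ := mem_carrier_iff.1 γ.corner_mem_carrier
    have hδ := mem_carrier_iff.1 (h₁.2 γ.corner_mem_carrier)
    rwa [← le_antisymm h₂.1 h₁.1, hγ] at hδ

theorem le_of_mem_of_mem (hγ : x ∈ γ.carrier) (hδ : x ∈ δ.carrier)
    (hk : δ.level ≤ γ.level) : γ ≤ δ :=
  ⟨hk, carrier_subset_of_mem hγ hδ hk⟩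

theorem cellAt_le_cellAt (hk : k' ≤ k) (x : Fin d → ℝ) : cellAt k x ≤ cellAt k' x :=
  le_of_mem_of_mem (mem_carrier_cellAt k x) (mem_carrier_cellAt k' x) hk

theorem isChain_Ici (γ : QCell d) : IsChain (· ≤ ·) (Set.Ici γ) := by
  intro δ hδ δ' hδ' _
  have hx := hδ.2 γ.corner_mem_carrier
  have hx' := hδ'.2 γ.corner_mem_carrier
  rcases le_total δ.level δ'.level with h | h
  · exact Or.inr (le_of_mem_of_mem hx' hx h)
  · exact Or.inl (le_of_mem_of_mem hx hx' h)

theorem side_le_side (h : γ ≤ δ) : γ.side ≤ δ.side :=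
  zpow_le_zpow_right₀ one_le_two (neg_le_neg h.1)

/-- An object of side `< 2 · 2⁻ᵏ` meets at most three cells of level `k` in each direction. -/
theorem exists_finset_cellAt_mem {u : Set (Fin d → ℝ)} (hu : Bornology.IsBounded u)
    (hs : sideLength d u < 2 ^ (1 - k)) :
    ∃ C : Finset (QCell d), #C ≤ 3 ^ d ∧ ∀ x ∈ u, cellAt k x ∈ C := by
  obtain ⟨a, ℓ, hℓ, hu⟩ := exists_hcube_of_sideLength_lt hu hs
  set f : Fin d → ℤ := fun i => ⌊a i * 2 ^ k⌋
  refine ⟨(Fintype.piFinset fun i => Icc (f i) (f i + 2)).image (QCell.mk k), ?_, ?_⟩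
  · refine card_image_le.trans ?_
    have h3 : ∀ i, (f i + 2 + 1 - f i).toNat = 3 := fun i => by omega
    simp [Int.card_Icc, h3]
  · intro x hx
    refine mem_image.2 ⟨_, Fintype.mem_piFinset.2 fun i => ?_, rfl⟩
    have h2k : (0 : ℝ) < 2 ^ k := zpow_pos two_pos k
    have hℓk : ℓ * 2 ^ k < 2 := by
      have : (2 : ℝ) ^ (1 - k) * 2 ^ k = 2 := by
        rw [← zpow_add₀ two_ne_zero]; norm_num
      nlinarith
    obtain ⟨hax, hxa⟩ := hu hx i
    have hlo : f i ≤ ⌊x i * 2 ^ k⌋ := Int.floor_le_floor (by gcongr)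
    have hhi : ⌊x i * 2 ^ k⌋ < f i + 3 := by
      rw [Int.floor_lt]
      have := Int.lt_floor_add_one (a i * 2 ^ k)
      push_cast
      nlinarith
    exact mem_Icc.2 ⟨hlo, by omega⟩

end QCell

section CentroidDecomposition

variable {α : Type*} [PartialOrder α]

def comparableCount (T : Finset (Finset α × α)) (a : α) : ℕ :=
  #{p ∈ T | a ∈ p.1 ∧ (a ≤ p.2 ∨ p.2 ≤ a)}

/-- A piece is a pair `(S, g)` of a subset `S ⊆ M` and its centroid `g`. -/
structure IsCentroidDecomposition (M : Finset α) (T : Finset (Finset α × α)) (k : ℕ) :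
    Prop where
  subset : ∀ p ∈ T, p.1 ⊆ M
  exists_between : ∀ a ∈ M, ∀ b ∈ M, a ≤ b → ∃ p ∈ T, a ∈ p.1 ∧ b ∈ p.1 ∧ a ≤ p.2 ∧ p.2 ≤ b
  comparableCount_le : ∀ a, comparableCount T a ≤ k

namespace IsCentroidDecomposition

variable {M : Finset α} {T : Finset (Finset α × α)} {k : ℕ}

theorem empty : IsCentroidDecomposition (∅ : Finset α) ∅ k :=
  ⟨by simp, by simp, by simp [comparableCount]⟩

theorem comparableCount_eq_zero (hT : IsCentroidDecomposition M T k) {a : α} (ha : a ∉ M) :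
    comparableCount T a = 0 :=
  card_eq_zero.2 <| filter_eq_empty_iff.2 fun p hp h => ha (hT.subset p hp h.1)

theorem biUnion {ι : Type*} {s : Finset ι} {M : ι → Finset α}
    {T : ι → Finset (Finset α × α)} (hT : ∀ i ∈ s, IsCentroidDecomposition (M i) (T i) k)
    (hsep : ∀ i ∈ s, ∀ j ∈ s, ∀ a ∈ M i, ∀ b ∈ M j, a ≤ b → i = j) :
    IsCentroidDecomposition (s.biUnion M) (s.biUnion T) k := by
  refine ⟨?_, ?_, fun a => ?_⟩
  · simp only [mem_biUnion]
    rintro p ⟨i, hi, hp⟩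
    exact ((hT i hi).subset p hp).trans (subset_biUnion_of_mem M hi)
  · simp only [mem_biUnion]
    rintro a ⟨i, hi, ha⟩ b ⟨j, hj, hb⟩ hab
    obtain rfl := hsep i hi j hj a ha b hb hab
    obtain ⟨p, hp, hpab⟩ := (hT i hi).exists_between a ha b hb hab
    exact ⟨p, ⟨i, hi, hp⟩, hpab⟩
  · by_cases ha : ∃ i ∈ s, a ∈ M i
    · obtain ⟨i, hi, hai⟩ := ha
      refine (card_le_card fun p hp => ?_).trans ((hT i hi).comparableCount_le a)
      simp only [mem_filter, mem_biUnion] at hp ⊢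
      obtain ⟨⟨j, hj, hpj⟩, hap, hcomp⟩ := hp
      obtain rfl := hsep j hj i hi a ((hT j hj).subset p hpj hap) a hai le_rfl
      exact ⟨hpj, hap, hcomp⟩
    · simp only [not_exists, not_and] at ha
      refine (card_eq_zero.2 <| filter_eq_empty_iff.2 fun p hp h => ?_).trans_le (Nat.zero_le k)
      obtain ⟨i, hi, hpi⟩ := mem_biUnion.1 hp
      exact ha i hi ((hT i hi).subset p hpi h.1)

end IsCentroidDecomposition

theorem Finset.exists_centroid {M : Finset α} (hM : M.Nonempty) :
    ∃ g ∈ M, (∀ a ∈ M, a < g → 2 * #{b ∈ M | b ≤ a} ≤ #M) ∧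
      (#M < 2 * #{b ∈ M | b ≤ g} ∨ ∀ a ∈ M, ¬ g < a) := by
  set S := {a ∈ M | #M < 2 * #{b ∈ M | b ≤ a}}
  rcases S.eq_empty_or_nonempty with hS | hS
  · have hsmall : ∀ a ∈ M, 2 * #{b ∈ M | b ≤ a} ≤ #M := fun a ha =>
      not_lt.1 fun h => (filter_eq_empty_iff.1 hS) ha h
    obtain ⟨g, hg⟩ := M.exists_maximal hM
    exact ⟨g, hg.prop, fun a ha _ => hsmall a ha, Or.inr fun a ha => hg.not_gt ha⟩
  · obtain ⟨g, hgmin⟩ := S.exists_minimal hS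
    obtain ⟨hgM, hg⟩ := mem_filter.1 hgmin.prop
    exact ⟨g, hgM, fun a ha hag => not_lt.1 fun h => hgmin.not_lt (mem_filter.2 ⟨ha, h⟩) hag,
      Or.inl hg⟩

theorem comparableCount_insert_union_le (M : Finset α) (g : α) (TU TD : Finset (Finset α × α))
    (a : α) : comparableCount (insert (M, g) (TU ∪ TD)) a ≤
      (if a ∈ M ∧ (a ≤ g ∨ g ≤ a) then 1 else 0) + comparableCount TU a + comparableCount TD a := by
  have := card_union_le {p ∈ TU | a ∈ p.1 ∧ (a ≤ p.2 ∨ p.2 ≤ a)}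
    {p ∈ TD | a ∈ p.1 ∧ (a ≤ p.2 ∨ p.2 ≤ a)}
  unfold comparableCount
  rw [filter_insert, filter_union]
  split_ifs
  · have := card_insert_le (M, g) ({p ∈ TU | a ∈ p.1 ∧ (a ≤ p.2 ∨ p.2 ≤ a)} ∪
      {p ∈ TD | a ∈ p.1 ∧ (a ≤ p.2 ∨ p.2 ≤ a)})
    omega
  · omega

theorem IsCentroidDecomposition.insert_centroid
    (hα : ∀ a : α, IsChain (· ≤ ·) (Set.Ici a)) {M : Finset α} {g : α} (hg : g ∈ M)
    {TU TD : Finset (Finset α × α)} {kU kD k : ℕ}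
    (hU : IsCentroidDecomposition {a ∈ M | ¬ a ≤ g} TU kU)
    (hD : IsCentroidDecomposition {a ∈ M | a < g} TD kD)
    (hkD : kD < k) (hkU : kU ≤ k) (hkU' : (∃ a ∈ M, g < a) → kU < k) :
    IsCentroidDecomposition M (insert (M, g) (TU ∪ TD)) k := by
  refine ⟨fun p hp => ?_, fun a ha b hb hab => ?_, fun a => ?_⟩
  · rcases mem_insert.1 hp with rfl | hp
    · exact subset_rfl
    rcases mem_union.1 hp with hp | hp
    · exact (hU.subset p hp).trans (filter_subset _ _)
    · exact (hD.subset p hp).trans (filter_subset _ _)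
  · by_cases hag : a ≤ g
    · by_cases hgb : g ≤ b
      · exact ⟨(M, g), mem_insert_self _ _, ha, hb, hag, hgb⟩
      have hbg : b < g := by
        refine lt_of_le_of_ne (((hα a).total hab hag).resolve_right hgb) ?_
        rintro rfl
        exact hgb le_rfl
      obtain ⟨p, hp, hpab⟩ := hD.exists_between a (mem_filter.2 ⟨ha, hab.trans_lt hbg⟩) b
        (mem_filter.2 ⟨hb, hbg⟩) hab
      exact ⟨p, mem_insert_of_mem (mem_union_right _ hp), hpab⟩
    · obtain ⟨p, hp, hpab⟩ := hU.exists_between a (mem_filter.2 ⟨ha, hag⟩) b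
        (mem_filter.2 ⟨hb, fun hbg => hag (hab.trans hbg)⟩) hab
      exact ⟨p, mem_insert_of_mem (mem_union_left _ hp), hpab⟩
  · have hcount := comparableCount_insert_union_le M g TU TD a
    have hU_le := hU.comparableCount_le a
    have hD_le := hD.comparableCount_le a
    by_cases haD : a ∈ {a ∈ M | a < g}
    · have haU : a ∉ {a ∈ M | ¬ a ≤ g} := fun h => (mem_filter.1 h).2 (mem_filter.1 haD).2.le
      rw [hU.comparableCount_eq_zero haU] at hcount
      split_ifs at hcount <;> omega
    rw [hD.comparableCount_eq_zero haD] at hcount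
    by_cases haU : a ∈ {a ∈ M | ¬ a ≤ g}
    · obtain ⟨haM, hag⟩ := mem_filter.1 haU
      split_ifs at hcount with h
      · have hga : g < a := lt_of_le_of_ne (h.2.resolve_left hag) (by rintro rfl; exact hag le_rfl)
        have := hkU' ⟨a, haM, hga⟩
        omega
      · omega
    · rw [hU.comparableCount_eq_zero haU] at hcount
      split_ifs at hcount <;> omega

theorem exists_isCentroidDecomposition_filter_lt (hα : ∀ a : α, IsChain (· ≤ ·) (Set.Ici a))
    {M : Finset α} {g : α} {k : ℕ}
    (h : ∀ c ∈ M, c < g → ∃ T, IsCentroidDecomposition {b ∈ M | b ≤ c} T k) :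
    ∃ T, IsCentroidDecomposition {a ∈ M | a < g} T k := by
  set D := {a ∈ M | a < g}
  choose! T hT using h
  set tops := {c ∈ D | Maximal (· ∈ D) c}
  have hD : D = tops.biUnion fun c => {b ∈ M | b ≤ c} := by
    ext a
    simp only [tops, mem_biUnion, mem_filter]
    constructor
    · intro ha
      obtain ⟨c, hac, hc⟩ := D.exists_le_maximal ha
      exact ⟨c, ⟨hc.prop, hc⟩, (mem_filter.1 ha).1, hac⟩
    · rintro ⟨c, ⟨hcD, -⟩, haM, hac⟩
      exact mem_filter.2 ⟨haM, hac.trans_lt (mem_filter.1 hcD).2⟩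
  rw [hD]
  refine ⟨tops.biUnion T,
    IsCentroidDecomposition.biUnion (fun c hc => ?_) fun c hc c' hc' a ha b hb hab => ?_⟩
  · obtain ⟨hcM, hcg⟩ := mem_filter.1 (mem_filter.1 hc).1
    exact hT c hcM hcg
  · have hcmax := (mem_filter.1 hc).2
    have hc'max := (mem_filter.1 hc').2
    rcases (hα a).total (mem_filter.1 ha).2 (hab.trans (mem_filter.1 hb).2) with h | h
    · exact hcmax.eq_of_le hc'max.prop h
    · exact (hc'max.eq_of_le hcmax.prop h).symm

theorem exists_isCentroidDecomposition_of_card_lt (hα : ∀ a : α, IsChain (· ≤ ·) (Set.Ici a))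
    (M : Finset α) {k : ℕ} (hM : #M < 2 ^ k) : ∃ T, IsCentroidDecomposition M T k := by
  induction M using Finset.strongInduction generalizing k with
  | H M ih =>
  rcases M.eq_empty_or_nonempty with rfl | hne
  · exact ⟨∅, .empty⟩
  obtain ⟨j, rfl⟩ : ∃ j, k = j + 1 :=
    Nat.exists_eq_add_one.2 (Nat.pos_of_ne_zero fun hk => by simp [hk, hne.ne_empty] at hM)
  have hM2 : #M < 2 ^ j * 2 := by rwa [pow_succ] at hM
  obtain ⟨g, hgM, hbelow, hcentroid⟩ := M.exists_centroid hne
  have hssub : ∀ {P : α → Prop} [DecidablePred P], ¬ P g → {a ∈ M | P a} ⊂ M := fun h =>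
    filter_ssubset.2 ⟨g, hgM, h⟩
  obtain ⟨TD, hTD⟩ := exists_isCentroidDecomposition_filter_lt hα fun c hc hcg =>
    ih _ (hssub hcg.not_ge) (k := j) (by have := hbelow c hc hcg; omega)
  have hU_card := card_filter_add_card_filter_not (s := M) (· ≤ g)
  -- If more than half of `M` lies below `g`, the rest is at most half of `M`; otherwise `g` is
  -- maximal, so the root piece does not count for the elements not below `g`.
  rcases hcentroid with hbig | hmax
  · obtain ⟨TU, hTU⟩ := ih {a ∈ M | ¬ a ≤ g} (hssub (not_not.2 le_rfl)) (k := j) (by omega)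
    exact ⟨_, hTU.insert_centroid hα hgM hTD (by omega) (by omega) fun _ => by omega⟩
  · obtain ⟨TU, hTU⟩ := ih {a ∈ M | ¬ a ≤ g} (hssub (not_not.2 le_rfl)) (k := j + 1)
      ((card_lt_card (hssub (not_not.2 le_rfl))).trans hM)
    exact ⟨_, hTU.insert_centroid hα hgM hTD (by omega) le_rfl
      fun ⟨a, ha, hga⟩ => (hmax a ha hga).elim⟩

/-- The quadtree centroid lemma. -/
theorem exists_isCentroidDecomposition (hα : ∀ a : α, IsChain (· ≤ ·) (Set.Ici a))
    (M : Finset α) : ∃ T, IsCentroidDecomposition M T (Nat.log 2 #M + 1) :=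
  exists_isCentroidDecomposition_of_card_lt hα M (Nat.lt_pow_succ_log_self one_lt_two _)

theorem IsCentroidDecomposition.sum_card_filter_le {ι : Type*} [Fintype ι] {M : Finset α}
    {T : Finset (Finset α × α)} {k m : ℕ} (hT : IsCentroidDecomposition M T k)
    (C : ι → Finset α) (hC : ∀ i, #(C i) ≤ m) :
    ∑ p ∈ T, #{i | ∃ a ∈ C i, a ∈ p.1 ∧ (a ≤ p.2 ∨ p.2 ≤ a)} ≤ Fintype.card ι * (m * k) := by
  calc ∑ p ∈ T, #{i | ∃ a ∈ C i, a ∈ p.1 ∧ (a ≤ p.2 ∨ p.2 ≤ a)}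
      = ∑ i, #{p ∈ T | ∃ a ∈ C i, a ∈ p.1 ∧ (a ≤ p.2 ∨ p.2 ≤ a)} :=
        sum_card_bipartiteAbove_eq_sum_card_bipartiteBelow _
    _ ≤ ∑ i, ∑ a ∈ C i, comparableCount T a := by
        refine sum_le_sum fun i _ => (card_le_card fun p hp => ?_).trans card_biUnion_le
        obtain ⟨hpT, a, ha, hap⟩ := mem_filter.1 hp
        exact mem_biUnion.2 ⟨a, ha, mem_filter.2 ⟨hpT, hap⟩⟩
    _ ≤ ∑ _i : ι, m * k := by
        refine sum_le_sum fun i _ => (sum_le_sum fun a _ => hT.comparableCount_le a).trans ?_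
        rw [sum_const, smul_eq_mul]
        exact Nat.mul_le_mul_right _ (hC i)
    _ = Fintype.card ι * (m * k) := by simp

end CentroidDecomposition

namespace SimpleGraph

variable {V ι : Type*} {G : SimpleGraph V}

theorem ncard_edgeSet_fromEdgeSet_le (s : Finset (Sym2 V)) :
    (fromEdgeSet (s : Set (Sym2 V))).edgeSet.ncard ≤ #s := by
  rw [edgeSet_fromEdgeSet, ← Set.ncard_coe_finset s]
  exact Set.ncard_le_ncard Set.sdiff_subset s.finite_toSet

theorem edist_fromEdgeSet_le_one {s : Set (Sym2 V)} {v w : V} (h : s(v, w) ∈ s) :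
    (fromEdgeSet s).edist v w ≤ 1 := by
  rw [edist_le_one_iff_adj_or_eq, fromEdgeSet_adj]
  by_cases hvw : v = w
  · exact Or.inr hvw
  · exact Or.inl ⟨h, hvw⟩

theorem ncard_edgeSet_finset_sup_le [Finite V] (I : Finset ι) (H : ι → SimpleGraph V) :
    (I.sup H).edgeSet.ncard ≤ ∑ i ∈ I, (H i).edgeSet.ncard := by
  induction I using Finset.induction_on with
  | empty => simp
  | insert i I hi ih =>
    rw [sup_insert, edgeSet_sup, sum_insert hi]
    exact (Set.ncard_union_le _ _).trans (Nat.add_le_add_left ih _)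

theorem isHopSpanner_of_edist_le {H : SimpleGraph V} {t : ℕ} (hH : H ≤ G)
    (h : ∀ u v, G.Adj u v → H.edist u v ≤ t) : IsHopSpanner G H t := by
  refine ⟨hH, fun u v huv => ?_⟩
  have hne : H.edist u v ≠ ⊤ := ((h u v huv).trans_lt (ENat.natCast_lt_top t)).ne
  obtain ⟨p, hp⟩ := exists_walk_of_edist_ne_top hne
  exact ⟨p, by exact_mod_cast hp.le.trans (h u v huv)⟩

theorem IsClique.exists_star {B : Finset V} (hB : G.IsClique (B : Set V)) :
    ∃ H ≤ G, H.edgeSet.ncard ≤ #B ∧ ∀ v ∈ B, ∀ w ∈ B, H.edist v w ≤ 2 := by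
  rcases B.eq_empty_or_nonempty with rfl | ⟨c, hc⟩
  · exact ⟨⊥, bot_le, by simp, by simp⟩
  refine ⟨fromEdgeSet (B.image (s(c, ·)) : Set (Sym2 V)), ?_,
    (ncard_edgeSet_fromEdgeSet_le _).trans card_image_le, fun v hv w hw => ?_⟩
  · rw [fromEdgeSet_le]
    rintro _ ⟨he, hdiag⟩
    obtain ⟨w, hw, rfl⟩ := mem_image.1 (mem_coe.1 he)
    exact hB hc hw fun h => hdiag (Sym2.mk_isDiag_iff.2 h)
  · have hcv : s(c, v) ∈ (B.image (s(c, ·)) : Set (Sym2 V)) := mem_image_of_mem _ hv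
    have hcw : s(c, w) ∈ (B.image (s(c, ·)) : Set (Sym2 V)) := mem_image_of_mem _ hw
    calc _ ≤ _ := SimpleGraph.edist_triangle (v := c)
      _ ≤ 1 + 1 := by
        rw [edist_comm]
        exact add_le_add (edist_fromEdgeSet_le_one hcv) (edist_fromEdgeSet_le_one hcw)
      _ = 2 := by norm_num

theorem exists_star_spanner [Finite V] (I : Finset ι) (B : ι → Finset V)
    (hB : ∀ i ∈ I, G.IsClique (B i : Set V)) :
    ∃ H ≤ G, H.edgeSet.ncard ≤ ∑ i ∈ I, #(B i) ∧
      ∀ i ∈ I, ∀ v ∈ B i, ∀ w ∈ B i, H.edist v w ≤ 2 := by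
  choose! H hHG hHcard hHdist using fun i hi => (hB i hi).exists_star
  refine ⟨I.sup H, Finset.sup_le hHG, (ncard_edgeSet_finset_sup_le I H).trans
    (sum_le_sum hHcard), fun i hi v hv w hw => ?_⟩
  exact (edist_anti (le_sup hi)).trans (hHdist i hi v hv w hw)

theorem exists_connector (A : Finset V) (I : Finset ι) (B : ι → Finset V) :
    ∃ H ≤ G, H.edgeSet.ncard ≤ #A * #I ∧
      ∀ u ∈ A, ∀ i ∈ I, ∀ v ∈ B i, G.Adj u v → ∃ w ∈ B i, H.Adj u w := by
  have hchoice : ∀ u i, ∃ w, (∃ v ∈ B i, G.Adj u v) → w ∈ B i ∧ G.Adj u w := fun u i => by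
    by_cases h : ∃ v ∈ B i, G.Adj u v
    · obtain ⟨v, hv, huv⟩ := h
      exact ⟨v, fun _ => ⟨hv, huv⟩⟩
    · exact ⟨u, fun h' => (h h').elim⟩
  choose f hf using hchoice
  set E := {x ∈ A ×ˢ I | ∃ v ∈ B x.2, G.Adj x.1 v}.image fun x => s(x.1, f x.1 x.2)
  refine ⟨fromEdgeSet (E : Set (Sym2 V)), ?_, ?_, fun u hu i hi v hv huv => ?_⟩
  · rw [fromEdgeSet_le]
    rintro _ ⟨he, -⟩
    obtain ⟨x, hx, rfl⟩ := mem_image.1 (mem_coe.1 he)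
    exact (hf x.1 x.2 (mem_filter.1 hx).2).2
  · refine (ncard_edgeSet_fromEdgeSet_le E).trans (card_image_le.trans ?_)
    exact (card_filter_le _ _).trans (card_product A I).le
  · obtain ⟨hw, huw⟩ := hf u i ⟨v, hv, huv⟩
    refine ⟨f u i, hw, (fromEdgeSet_adj _).2 ⟨?_, huw.ne⟩⟩
    exact mem_coe.2 (mem_image.2 ⟨(u, i), mem_filter.2 ⟨mem_product.2 ⟨hu, hi⟩, v, hv, huv⟩, rfl⟩)

/-- Stars on the cliques, plus one edge from each `u ∈ A` into each clique it is adjacent to. -/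
theorem exists_spanner_of_cliques [Finite V] (A B : Finset V) (I : Finset ι)
    (C : ι → Finset V) (hCB : ∀ i ∈ I, C i ⊆ B) (hC : ∀ i ∈ I, G.IsClique (C i : Set V))
    (hcover : ∀ v ∈ B, ∃ i ∈ I, v ∈ C i) :
    ∃ H ≤ G, H.edgeSet.ncard ≤ #I * (#A + #B) ∧
      ∀ u ∈ A, ∀ v ∈ B, G.Adj u v → H.edist u v ≤ 3 := by
  obtain ⟨H₁, hH₁G, hH₁card, hH₁dist⟩ := exists_star_spanner I C hC
  obtain ⟨H₂, hH₂G, hH₂card, hH₂adj⟩ := exists_connector (G := G) A I C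
  refine ⟨H₁ ⊔ H₂, sup_le hH₁G hH₂G, ?_, fun u hu v hv huv => ?_⟩
  · have hstars : ∑ i ∈ I, #(C i) ≤ #I * #B := by
      simpa using sum_le_sum fun i hi => card_le_card (hCB i hi)
    rw [edgeSet_sup]
    refine (Set.ncard_union_le _ _).trans ?_
    nlinarith
  · obtain ⟨i, hi, hvi⟩ := hcover v hv
    obtain ⟨w, hwi, huw⟩ := hH₂adj u hu i hi v hvi huv
    calc (H₁ ⊔ H₂).edist u v ≤ (H₁ ⊔ H₂).edist u w + (H₁ ⊔ H₂).edist w v :=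
          SimpleGraph.edist_triangle
      _ ≤ 1 + 2 := add_le_add ((edist_anti le_sup_right).trans (edist_eq_one_iff_adj.2 huw).le)
          ((edist_anti le_sup_left).trans (hH₁dist i hi w hwi v hvi))
      _ = 3 := by norm_num

end SimpleGraph

section FatObjects

variable {ι X : Type*}

def intersectionGraph (obj : ι → Set X) : SimpleGraph ι :=
  SimpleGraph.fromRel fun i j => (obj i ∩ obj j).Nonempty

theorem intersectionGraph_adj {obj : ι → Set X} {i j : ι} :
    (intersectionGraph obj).Adj i j ↔ i ≠ j ∧ (obj i ∩ obj j).Nonempty := by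
  simp only [intersectionGraph, SimpleGraph.fromRel_adj, Set.inter_comm (obj j), or_self]

theorem isClique_intersectionGraph {obj : ι → Set X} {B : Set ι} {x : X}
    (h : ∀ i ∈ B, x ∈ obj i) : (intersectionGraph obj).IsClique B :=
  fun i hi j hj hij => intersectionGraph_adj.2 ⟨hij, x, h i hi, h j hj⟩

theorem exists_levels [Fintype ι] (s : ι → ℝ) :
    ∃ k : ι → ℤ, (∀ i, s i < 2 ^ (1 - k i)) ∧ (∀ i, 0 < s i → 2 ^ (-k i) ≤ s i) ∧
      ∀ i j, ¬ 0 < s i → k j ≤ k i := by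
  set K : ℤ := ∑ j, |Int.log 2 (s j)|
  refine ⟨fun i => if 0 < s i then -Int.log 2 (s i) else K, fun i => ?_, fun i hi => ?_,
    fun i j hi => ?_⟩
  · dsimp only
    split_ifs with hi
    · rw [sub_neg_eq_add, add_comm]
      exact_mod_cast Int.lt_zpow_succ_log_self one_lt_two (s i)
    · exact (not_lt.1 hi).trans_lt (zpow_pos two_pos _)
  · simp only [if_pos hi, neg_neg]
    exact_mod_cast Int.zpow_log_le_self one_lt_two hi
  · simp only [if_neg hi]
    split_ifs
    · exact (neg_le_abs _).trans
        (single_le_sum (f := fun j => |Int.log 2 (s j)|) (fun _ _ => abs_nonneg _) (mem_univ j))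
    · exact le_rfl

variable {d c : ℕ} [Fintype ι] {obj : ι → Set (Fin d → ℝ)}

open QCell

def smallPart (C : ι → Finset (QCell d)) (π : Finset (QCell d) × QCell d) : Finset ι :=
  {u | ∃ γ ∈ C u, γ ∈ π.1 ∧ γ ≤ π.2}

/-- By fatness these objects are pierced by `c` points. -/
def bigPart (obj : ι → Set (Fin d → ℝ)) (C : ι → Finset (QCell d))
    (π : Finset (QCell d) × QCell d) : Finset ι :=
  {v | (∃ γ ∈ C v, γ ∈ π.1 ∧ π.2 ≤ γ) ∧ (obj v ∩ π.2.carrier).Nonempty ∧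
    π.2.side ≤ sideLength d (obj v)}

theorem exists_spanner_smallPart_bigPart (hfat : CFat d c (Set.range obj))
    (C : ι → Finset (QCell d)) (π : Finset (QCell d) × QCell d) :
    ∃ H ≤ intersectionGraph obj, H.edgeSet.ncard ≤ c * (#(smallPart C π) + #(bigPart obj C π)) ∧
      ∀ u ∈ smallPart C π, ∀ v ∈ bigPart obj C π,
        (intersectionGraph obj).Adj u v → H.edist u v ≤ 3 := by
  obtain ⟨P, hPc, hP⟩ := hfat π.2.corner π.2.side π.2.side_pos
  have hcover : ∀ v ∈ bigPart obj C π, ∃ p ∈ P, v ∈ {w ∈ bigPart obj C π | p ∈ obj w} := by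
    intro v hv
    obtain ⟨-, ⟨x, hxv, hxg⟩, hside⟩ := (mem_filter.1 hv).2
    obtain ⟨p, hp, hpv⟩ := hP (obj v) ⟨v, rfl⟩ ⟨x, hxv, π.2.carrier_subset_hcube hxg⟩ hside
    exact ⟨p, hp, mem_filter.2 ⟨hv, hpv⟩⟩
  obtain ⟨H, hHG, hHcard, hH⟩ := SimpleGraph.exists_spanner_of_cliques
    (smallPart C π) (bigPart obj C π) P (fun p => {w ∈ bigPart obj C π | p ∈ obj w})
    (fun _ _ => filter_subset _ _)
    (fun _ _ => isClique_intersectionGraph fun _ hw => (mem_filter.1 (mem_coe.1 hw)).2) hcover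
  exact ⟨H, hHG, hHcard.trans (Nat.mul_le_mul_right _ hPc), hH⟩

theorem exists_piece_of_inter_nonempty {k : ι → ℤ} {C : ι → Finset (QCell d)}
    (hC : ∀ i, ∀ x ∈ obj i, cellAt (k i) x ∈ C i) {T : Finset (Finset (QCell d) × QCell d)}
    {m : ℕ} (hT : IsCentroidDecomposition (univ.biUnion C) T m) {u v : ι}
    (huv : (obj u ∩ obj v).Nonempty) (hk : k v ≤ k u) (hv : 2 ^ (-k v) ≤ sideLength d (obj v)) :
    ∃ π ∈ T, u ∈ smallPart C π ∧ v ∈ bigPart obj C π := by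
  obtain ⟨x, hxu, hxv⟩ := huv
  have hγu := hC u x hxu
  have hγv := hC v x hxv
  obtain ⟨π, hπ, hγuπ, hγvπ, hγu_le, hle_γv⟩ := hT.exists_between _
    (mem_biUnion.2 ⟨u, mem_univ u, hγu⟩) _ (mem_biUnion.2 ⟨v, mem_univ v, hγv⟩)
    (cellAt_le_cellAt hk x)
  refine ⟨π, hπ, mem_filter.2 ⟨mem_univ u, _, hγu, hγuπ, hγu_le⟩, mem_filter.2 ⟨mem_univ v,
    ⟨_, hγv, hγvπ, hle_γv⟩, ⟨x, hxv, hγu_le.2 (mem_carrier_cellAt _ x)⟩, ?_⟩⟩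
  exact (side_le_side hle_γv).trans hv

theorem sum_card_smallPart_add_card_bigPart_le (obj : ι → Set (Fin d → ℝ))
    {C : ι → Finset (QCell d)} {M : Finset (QCell d)} {T : Finset (Finset (QCell d) × QCell d)}
    {k m : ℕ} (hT : IsCentroidDecomposition M T k) (hC : ∀ i, #(C i) ≤ m) :
    ∑ π ∈ T, (#(smallPart C π) + #(bigPart obj C π)) ≤ 2 * (Fintype.card ι * (m * k)) := by
  calc ∑ π ∈ T, (#(smallPart C π) + #(bigPart obj C π))
      ≤ ∑ π ∈ T, 2 * #{i | ∃ γ ∈ C i, γ ∈ π.1 ∧ (γ ≤ π.2 ∨ π.2 ≤ γ)} := by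
        refine sum_le_sum fun π _ => ?_
        have hsmall : #(smallPart C π) ≤ #{i | ∃ γ ∈ C i, γ ∈ π.1 ∧ (γ ≤ π.2 ∨ π.2 ≤ γ)} :=
          card_le_card fun u hu => by
            obtain ⟨γ, hγ, hγπ, hle⟩ := (mem_filter.1 hu).2
            exact mem_filter.2 ⟨mem_univ u, γ, hγ, hγπ, Or.inl hle⟩
        have hbig : #(bigPart obj C π) ≤ #{i | ∃ γ ∈ C i, γ ∈ π.1 ∧ (γ ≤ π.2 ∨ π.2 ≤ γ)} :=
          card_le_card fun v hv => by
            obtain ⟨⟨γ, hγ, hγπ, hle⟩, -⟩ := (mem_filter.1 hv).2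
            exact mem_filter.2 ⟨mem_univ v, γ, hγ, hγπ, Or.inr hle⟩
        omega
    _ = 2 * ∑ π ∈ T, #{i | ∃ γ ∈ C i, γ ∈ π.1 ∧ (γ ≤ π.2 ∨ π.2 ≤ γ)} := (mul_sum _ _ _).symm
    _ ≤ 2 * (Fintype.card ι * (m * k)) := Nat.mul_le_mul_left 2 (hT.sum_card_filter_le C hC)

theorem exists_spanner_of_sideLength_nonpos (hbd : ∀ i, Bornology.IsBounded (obj i)) :
    ∃ H ≤ intersectionGraph obj, H.edgeSet.ncard ≤ Fintype.card ι ∧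
      ∀ u v, ¬ 0 < sideLength d (obj u) → ¬ 0 < sideLength d (obj v) →
        (intersectionGraph obj).Adj u v → H.edist u v ≤ 2 := by
  set pts : Finset ι := {i | ¬ 0 < sideLength d (obj i) ∧ (obj i).Nonempty}
  obtain ⟨H, hHG, hHcard, hH⟩ := SimpleGraph.exists_star_spanner (pts.image obj)
    (fun σ => {i ∈ pts | obj i = σ}) fun σ hσ => by
      obtain ⟨i, hi, rfl⟩ := mem_image.1 hσ
      obtain ⟨x, hx⟩ := (mem_filter.1 hi).2.2
      exact isClique_intersectionGraph fun j hj => (mem_filter.1 (mem_coe.1 hj)).2 ▸ hx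
  refine ⟨H, hHG, ?_, fun u v hu hv huv => ?_⟩
  · rw [← card_eq_sum_card_image] at hHcard
    exact hHcard.trans (card_le_univ _)
  obtain ⟨-, x, hxu, hxv⟩ := intersectionGraph_adj.1 huv
  have hsame : obj u = obj v := by
    ext y
    constructor <;> intro hy
    · rwa [eq_of_mem_of_sideLength_nonpos (hbd u) (not_lt.1 hu) hy hxu]
    · rwa [eq_of_mem_of_sideLength_nonpos (hbd v) (not_lt.1 hv) hy hxv]
  have hupts : u ∈ pts := mem_filter.2 ⟨mem_univ u, hu, x, hxu⟩
  have hvpts : v ∈ pts := mem_filter.2 ⟨mem_univ v, hv, x, hxv⟩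
  exact hH (obj u) (mem_image_of_mem obj hupts) u (mem_filter.2 ⟨hupts, rfl⟩) v
    (mem_filter.2 ⟨hvpts, hsame.symm⟩)

theorem exists_isHopSpanner_ncard_le (hbd : ∀ i, Bornology.IsBounded (obj i))
    (hfat : CFat d c (Set.range obj)) :
    ∃ H, IsHopSpanner (intersectionGraph obj) H 3 ∧ H.edgeSet.ncard ≤ Fintype.card ι +
      c * (2 * (Fintype.card ι * (3 ^ d * (Nat.log 2 (3 ^ d * Fintype.card ι) + 1)))) := by
  obtain ⟨k, hk_lt, hk_le, hk_max⟩ := exists_levels fun i => sideLength d (obj i)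
  choose C hC_card hC_mem using fun i => exists_finset_cellAt_mem (hbd i) (hk_lt i)
  obtain ⟨T, hT⟩ := exists_isCentroidDecomposition isChain_Ici (univ.biUnion C)
  choose Hπ hHπG hHπcard hHπdist using exists_spanner_smallPart_bigPart hfat C
  obtain ⟨H₀, hH₀G, hH₀card, hH₀dist⟩ := exists_spanner_of_sideLength_nonpos hbd
  have hlarger : ∀ u v, (intersectionGraph obj).Adj u v → 0 < sideLength d (obj v) →
      k v ≤ k u → (H₀ ⊔ T.sup Hπ).edist u v ≤ 3 := fun u v huv hv hkuv => by
    obtain ⟨π, hπ, hu, hv⟩ :=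
      exists_piece_of_inter_nonempty hC_mem hT (intersectionGraph_adj.1 huv).2 hkuv (hk_le v hv)
    exact (SimpleGraph.edist_anti (le_sup_of_le_right (le_sup hπ))).trans
      (hHπdist π u hu v hv huv)
  refine ⟨H₀ ⊔ T.sup Hπ, SimpleGraph.isHopSpanner_of_edist_le
    (sup_le hH₀G (Finset.sup_le fun π _ => hHπG π)) fun u v huv => ?_, ?_⟩
  · rw [Nat.cast_ofNat]
    by_cases hu : 0 < sideLength d (obj u) <;> by_cases hv : 0 < sideLength d (obj v)
    · rcases le_total (k v) (k u) with h | h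
      · exact hlarger u v huv hv h
      · rw [SimpleGraph.edist_comm]
        exact hlarger v u huv.symm hu h
    · rw [SimpleGraph.edist_comm]
      exact hlarger v u huv.symm hu (hk_max v u hv)
    · exact hlarger u v huv hv (hk_max u v hu)
    · exact (SimpleGraph.edist_anti le_sup_left).trans
        ((hH₀dist u v hu hv huv).trans (by norm_num))
  · have hM : Nat.log 2 #(univ.biUnion C) ≤ Nat.log 2 (3 ^ d * Fintype.card ι) :=
      Nat.log_mono_right <| card_biUnion_le.trans <|
        (sum_le_sum fun i _ => hC_card i).trans (by simp [mul_comm])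
    rw [SimpleGraph.edgeSet_sup]
    refine (Set.ncard_union_le _ _).trans (add_le_add hH₀card ?_)
    refine (SimpleGraph.ncard_edgeSet_finset_sup_le T Hπ).trans
      ((sum_le_sum fun π _ => hHπcard π).trans ?_)
    rw [← mul_sum]
    gcongr
    exact (sum_card_smallPart_add_card_bigPart_le obj hT hC_card).trans (by gcongr)

end FatObjects

theorem one_le_two_mul_log {n : ℕ} (hn : 2 ≤ n) : 1 ≤ 2 * Real.log n := by
  have := Real.log_two_gt_d9
  have : Real.log 2 ≤ Real.log n := Real.log_le_log two_pos (by exact_mod_cast hn)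
  linarith

theorem natLog_two_mul_add_one_le (B : ℕ) {n : ℕ} (hn : 2 ≤ n) :
    (Nat.log 2 (B * n) : ℝ) + 1 ≤ (4 * B + 4) * Real.log n := by
  have h1 := one_le_two_mul_log hn
  have hn0 : (0 : ℝ) < n := by positivity
  have hlog : (Nat.log 2 (B * n) : ℝ) ≤ 2 * (B + Real.log n) := by
    rcases B.eq_zero_or_pos with rfl | hB
    · simp only [zero_mul, Nat.log_zero_right, CharP.cast_eq_zero, zero_add]
      linarith
    have hB0 : (0 : ℝ) < B := by exact_mod_cast hB
    have hB1 : (1 : ℝ) ≤ B := by exact_mod_cast hB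
    calc (Nat.log 2 (B * n) : ℝ) ≤ Real.logb 2 (B * n) := by
          exact_mod_cast Real.natLog_le_logb (B * n) 2
      _ ≤ 2 * Real.log (B * n) := by
          rw [Real.logb, div_le_iff₀ (Real.log_pos one_lt_two)]
          have : 0 ≤ Real.log (B * n) :=
            Real.log_nonneg (one_le_mul_of_one_le_of_one_le hB1 (by exact_mod_cast (by omega)))
          nlinarith [Real.log_two_gt_d9]
      _ = 2 * (Real.log B + Real.log n) := by rw [Real.log_mul hB0.ne' hn0.ne']
      _ ≤ 2 * (B + Real.log n) := by linarith [Real.log_le_sub_one_of_pos hB0]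
  nlinarith [mul_le_mul_of_nonneg_left h1 (Nat.cast_nonneg (α := ℝ) B)]

end

/-- The intersection graph of any `n` `c`-fat (bounded, nonempty) objects in `ℝ^d`
admits a 3-hop spanner with `O_{d,c}(n log n)` edges. -/
theorem fat_objects_three_hop_spanner (d c : ℕ) :
    ∃ K : ℝ, 0 < K ∧ ∀ (n : ℕ) (obj : Fin n → Set (Fin d → ℝ)),
      (∀ i, (obj i).Nonempty) → (∀ i, Bornology.IsBounded (obj i)) →
      CFat d c (Set.range obj) →
      ∃ H : SimpleGraph (Fin n),
        IsHopSpanner (SimpleGraph.fromRel fun i j => (obj i ∩ obj j).Nonempty) H 3 ∧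
        (H.edgeSet.ncard : ℝ) ≤ K * n * Real.log n := by
  refine ⟨2 + 2 * c * 3 ^ d * (4 * 3 ^ d + 4), by positivity, fun n obj _ hbd hfat => ?_⟩
  obtain ⟨H, hH, hcard⟩ := exists_isHopSpanner_ncard_le hbd hfat
  refine ⟨H, hH, ?_⟩
  rw [Fintype.card_fin] at hcard
  rcases lt_or_ge n 2 with hn | hn
  · have : Subsingleton (Fin n) := Fin.subsingleton_iff_le_one.2 (by omega)
    have hbot : H = ⊥ := by
      ext a b
      simp [Subsingleton.elim a b]
    subst hbot
    interval_cases n <;> simp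
  have hL := natLog_two_mul_add_one_le (3 ^ d) hn
  push_cast at hL
  have hlog := one_le_two_mul_log hn
  have hcard' : (H.edgeSet.ncard : ℝ) ≤
      n + c * (2 * (n * (3 ^ d * (Nat.log 2 (3 ^ d * n) + 1)))) := by exact_mod_cast hcard
  have hn0 : (0 : ℝ) ≤ n := Nat.cast_nonneg n
  have hA : (0 : ℝ) ≤ 2 * c * 3 ^ d * n := by positivity
  nlinarith [mul_le_mul_of_nonneg_left hL hA, mul_le_mul_of_nonneg_left hlog hn0]
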